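/- arXiv:1511.05080 — 4 statements merged into one kernel-verified Lean document; each statement's English description precedes it below -/
import Mathlib

section
/- Fix constants c₀, c₁ ∈ (0,1). For every incompressible unit vector x ∈ Incomp(c₀,c₁) ⊂ S^{n−1}, at least ⌈(1/2)c₀c₁²n⌉ coordinates x_k of x satisfy c₁/√(2n) ≤ |x_k| ≤ 1/√(c₀n). -/
/-- A vector in `ℝⁿ` is sparse if its support has at most `c₀ n` coordinates. -/
def Sparse {n : ℕ} (c₀ : ℝ) (y : EuclideanSpace ℝ (Fin n)) : Prop :=
  ((Finset.univ.filter fun i => y i ≠ 0).card : ℝ) ≤ c₀ * n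

/-- A unit vector is compressible if it is within distance `c₁` of the set of sparse vectors. -/
def Compressible {n : ℕ} (c₀ c₁ : ℝ) (x : EuclideanSpace ℝ (Fin n)) : Prop :=
  ‖x‖ = 1 ∧ ∃ y : EuclideanSpace ℝ (Fin n), Sparse c₀ y ∧ ‖x - y‖ ≤ c₁

/-- A unit vector is incompressible if it is not compressible. -/
def Incompressible {n : ℕ} (c₀ c₁ : ℝ) (x : EuclideanSpace ℝ (Fin n)) : Prop :=
  ‖x‖ = 1 ∧ ¬ ∃ y : EuclideanSpace ℝ (Fin n), Sparse c₀ y ∧ ‖x - y‖ ≤ c₁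

/-!
Let `t = 1/√(c₀n)`. Since `‖x‖ = 1`, at most `c₀n` coordinates of `x` exceed `t` in absolute
value. Zeroing them leaves a vector `z` with `x - z` sparse, so incompressibility forces
`‖z‖ > c₁`. The coordinates of `z` below `c₁/√(2n)` contribute at most `n · c₁²/(2n) = c₁²/2`
to `‖z‖²`, and each of the others is a coordinate of `x` in the range `[c₁/√(2n), t]`,
contributing at most `t² = 1/(c₀n)`. Hence more than `(c₁²/2) · c₀n` coordinates lie in that range.
-/

open Finset

namespace EuclideanSpace

variable {ι : Type*}

theorem card_lt_abs_mul_sq_le_norm_sq [Fintype ι] (x : EuclideanSpace ℝ ι) {t : ℝ} (ht : 0 ≤ t) :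
    (#{k | t < |x k|} : ℝ) * t ^ 2 ≤ ‖x‖ ^ 2 := by
  rw [real_norm_sq_eq, ← nsmul_eq_mul]
  calc #{k | t < |x k|} • t ^ 2 ≤ ∑ k ∈ {k | t < |x k|}, x k ^ 2 :=
        card_nsmul_le_sum _ _ _ fun k hk ↦ by
          simpa only [sq_abs] using pow_le_pow_left₀ ht (mem_filter.mp hk).2.le 2
    _ ≤ ∑ k, x k ^ 2 := sum_le_univ_sum_of_nonneg fun k ↦ sq_nonneg _

theorem norm_sq_le_of_abs_le [Fintype ι] (z : EuclideanSpace ℝ ι) {a b : ℝ} (hb : ∀ k, |z k| ≤ b) :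
    ‖z‖ ^ 2 ≤ #{k | a ≤ |z k|} * b ^ 2 + Fintype.card ι * a ^ 2 := by
  rw [real_norm_sq_eq, ← sum_filter_add_sum_filter_not univ (fun k ↦ a ≤ |z k|)]
  gcongr
  · rw [← nsmul_eq_mul]
    refine sum_le_card_nsmul _ _ _ fun k _ ↦ ?_
    simpa only [sq_abs] using pow_le_pow_left₀ (abs_nonneg _) (hb k) 2
  · calc ∑ k ∈ {k | ¬a ≤ |z k|}, z k ^ 2 ≤ #{k | ¬a ≤ |z k|} • a ^ 2 :=
          sum_le_card_nsmul _ _ _ fun k hk ↦ by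
            simpa only [sq_abs] using
              pow_le_pow_left₀ (abs_nonneg _) (not_le.mp (mem_filter.mp hk).2).le 2
      _ ≤ Fintype.card ι * a ^ 2 := by
          rw [nsmul_eq_mul]
          gcongr
          exact_mod_cast card_filter_le _ _

noncomputable def dropLarge (t : ℝ) (x : EuclideanSpace ℝ ι) : EuclideanSpace ℝ ι :=
  WithLp.toLp 2 fun k ↦ if t < |x k| then 0 else x k

variable {t : ℝ} {x : EuclideanSpace ℝ ι}

theorem abs_dropLarge_le (ht : 0 ≤ t) (k : ι) : |dropLarge t x k| ≤ t := by
  dsimp only [dropLarge]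
  split_ifs with h
  · simpa using ht
  · exact not_lt.mp h

theorem lt_abs_of_sub_dropLarge_ne_zero {k : ι} (hk : (x - dropLarge t x) k ≠ 0) :
    t < |x k| := by
  by_contra h
  simp [dropLarge, h] at hk

theorem abs_le_of_le_abs_dropLarge {a : ℝ} (ha : 0 < a) {k : ι} (hk : a ≤ |dropLarge t x k|) :
    a ≤ |x k| ∧ |x k| ≤ t := by
  by_cases h : t < |x k|
  · simp only [dropLarge, h, if_true, PiLp.toLp_apply, abs_zero] at hk
    exact absurd hk (not_le.mpr ha)
  · simp_all [dropLarge]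

end EuclideanSpace

open EuclideanSpace

theorem Incompressible.lt_norm {n : ℕ} {c₀ c₁ : ℝ} {x : EuclideanSpace ℝ (Fin n)}
    (hx : Incompressible c₀ c₁ x) {z : EuclideanSpace ℝ (Fin n)} (hz : Sparse c₀ (x - z)) :
    c₁ < ‖z‖ :=
  not_le.mp fun h ↦ hx.2 ⟨x - z, hz, by rwa [sub_sub_cancel]⟩

theorem sparse_sub_dropLarge {n : ℕ} {c₀ : ℝ} (hc₀ : 0 < c₀ * n) {x : EuclideanSpace ℝ (Fin n)}
    (hx : ‖x‖ ≤ 1) : Sparse c₀ (x - dropLarge (1 / √(c₀ * n)) x) := by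
  have hcount := (card_lt_abs_mul_sq_le_norm_sq x (t := 1 / √(c₀ * n)) (by positivity)).trans
    (pow_le_one₀ (norm_nonneg x) hx)
  rw [div_pow, Real.sq_sqrt hc₀.le, one_pow, mul_one_div, div_le_one hc₀] at hcount
  refine le_trans ?_ hcount
  exact_mod_cast card_le_card fun k hk ↦
    mem_filter.mpr ⟨mem_univ k, lt_abs_of_sub_dropLarge_ne_zero (mem_filter.mp hk).2⟩

/-- Incompressible vectors are spread: at least `⌈(1/2)c₀c₁²n⌉` coordinates satisfy
`c₁/√(2n) ≤ |x_k| ≤ 1/√(c₀ n)`. -/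
theorem stmt7 {n : ℕ} (c₀ c₁ : ℝ) (h₀ : c₀ ∈ Set.Ioo (0 : ℝ) 1) (h₁ : c₁ ∈ Set.Ioo (0 : ℝ) 1)
    (x : EuclideanSpace ℝ (Fin n)) (hx : Incompressible c₀ c₁ x) :
    ⌈(1 / 2 : ℝ) * c₀ * c₁ ^ 2 * n⌉₊ ≤
      (Finset.univ.filter fun k =>
        c₁ / Real.sqrt (2 * n) ≤ |x k| ∧ |x k| ≤ 1 / Real.sqrt (c₀ * n)).card := by
  have hn : 0 < n := Nat.pos_of_ne_zero <| by
    rintro rfl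
    simpa [Subsingleton.elim x 0] using hx.1
  have hm : 0 < c₀ * n := mul_pos h₀.1 (by exact_mod_cast hn)
  set t := 1 / √(c₀ * n)
  set a := c₁ / √(2 * n)
  set z := dropLarge t x
  have hz : c₁ < ‖z‖ := hx.lt_norm (sparse_sub_dropLarge hm hx.1.le)
  have ha : 0 < a := div_pos h₁.1 (by positivity)
  have hspread : (#{k | a ≤ |z k|} : ℝ) ≤ #{k | a ≤ |x k| ∧ |x k| ≤ t} := by
    exact_mod_cast card_le_card <| monotone_filter_right _ fun _ _ ↦
      abs_le_of_le_abs_dropLarge ha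
  have hnorm := norm_sq_le_of_abs_le z (a := a) (abs_dropLarge_le (by positivity))
  rw [Fintype.card_fin, div_pow, div_pow, one_pow, Real.sq_sqrt hm.le,
    Real.sq_sqrt (by positivity), mul_one_div,
    show (n : ℝ) * (c₁ ^ 2 / (2 * n)) = c₁ ^ 2 / 2 by field_simp] at hnorm
  have hc₁ : c₁ ^ 2 < ‖z‖ ^ 2 := pow_lt_pow_left₀ hz h₁.1.le two_ne_zero
  have : c₁ ^ 2 / 2 * (c₀ * n) < #{k | a ≤ |x k| ∧ |x k| ≤ t} := by
    rw [← lt_div_iff₀ hm]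
    linarith [div_le_div_of_nonneg_right hspread hm.le]
  rw [Nat.ceil_le]
  linarith
end

section
/- Fix c₀, c₁ ∈ (0,1) and suppose n ≥ 2/c₀. Then the set Comp(c₀,c₁) of compressible unit vectors in S^{n−1} admits a (3c₁)-net of cardinality at most (18/(c₀c₁))^{c₀n}. -/
/-!
For a set `S` of `m = ⌊c₀ n⌋` coordinates, the unit vectors supported on `S` lie in the unit
sphere of an `m`-dimensional space; a maximal `c₁`-separated family there is a `c₁`-net, and
comparing volumes of disjoint balls of radius `c₁/2` bounds its size by `(1 + 2/c₁)^m`. The union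
over all `S` is a `c₁`-net of the sparse unit vectors of size at most
`(n choose m) (3/c₁)^m ≤ (e n/m · 3/c₁)^m ≤ (18/(c₀ c₁))^(c₀ n)`, using `m ≥ c₀ n / 2`.
Normalizing the sparse approximant of a compressible vector moves it by at most `c₁`, so every
compressible vector is within `3 c₁` of the net.
-/

open MeasureTheory Metric Module Finset Real
open scoped NNReal ENNReal

theorem Metric.IsSeparated.lt_dist {X : Type*} [PseudoMetricSpace X] {C : Set X} {ε : ℝ≥0}
    (hC : IsSeparated ε C) {a b : X} (ha : a ∈ C) (hb : b ∈ C) (hab : a ≠ b) :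
    (ε : ℝ) < dist a b := by
  have : (ε : ℝ≥0∞) < edist a b := hC ha hb hab
  rwa [← not_le, edist_le_coe, ← NNReal.coe_le_coe, coe_nndist, not_le] at this

theorem norm_sub_inv_norm_smul_le {E : Type*} [NormedAddCommGroup E] [NormedSpace ℝ E] {x : E}
    (hx : ‖x‖ = 1) (y : E) : ‖y - ‖y‖⁻¹ • y‖ ≤ ‖x - y‖ := by
  rcases eq_or_ne y 0 with rfl | hy
  · simp
  have hy' : ‖y‖ ≠ 0 := norm_ne_zero_iff.mpr hy
  calc ‖y - ‖y‖⁻¹ • y‖ = ‖(1 - ‖y‖⁻¹) • y‖ := by rw [sub_smul, one_smul]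
    _ = |‖x‖ - ‖y‖| := by
        rw [norm_smul, norm_eq_abs, ← abs_norm y, ← abs_mul, abs_norm, hx, ← abs_neg]
        congr 1; field_simp; ring
    _ ≤ ‖x - y‖ := abs_norm_sub_norm_le x y

section Packing

variable {E : Type*} [NormedAddCommGroup E] [NormedSpace ℝ E] [FiniteDimensional ℝ E]

theorem Finset.card_le_of_isSeparated_of_subset_closedBall {C : Finset E} {ε : ℝ≥0}
    (hε : 0 < ε) (hC : (C : Set E) ⊆ closedBall 0 1) (hsep : IsSeparated ε (C : Set E)) :
    (C.card : ℝ) ≤ (1 + 2 / ε) ^ finrank ℝ E := by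
  borelize E
  set μ : Measure E := Measure.addHaar
  have hε' : (0 : ℝ) < ε / 2 := by positivity
  have hdisj : (C : Set E).PairwiseDisjoint fun x => ball x (ε / 2) := fun a ha b hb hab =>
    ball_disjoint_ball (by linarith [hsep.lt_dist ha hb hab])
  have hsub : ∀ x ∈ C, ball x (ε / 2) ⊆ ball (0 : E) (1 + ε / 2) := fun x hx =>
    ball_subset_ball' (by linarith [dist_zero_right x ▸ mem_closedBall_zero_iff.mp (hC hx)])
  have hvol : ∑ x ∈ C, μ (ball x (ε / 2)) ≤ μ (ball 0 (1 + ε / 2)) := by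
    rw [← measure_biUnion_finset hdisj fun _ _ => measurableSet_ball]
    exact measure_mono (Set.iUnion₂_subset hsub)
  simp only [Measure.addHaar_ball_of_pos μ _ hε',
    Measure.addHaar_ball_of_pos μ _ (by positivity : (0 : ℝ) < 1 + ε / 2), Finset.sum_const,
    nsmul_eq_mul, ← mul_assoc] at hvol
  have hvol' := (ENNReal.mul_le_mul_iff_left (measure_ball_pos μ (0 : E) one_pos).ne'
    measure_ball_lt_top.ne).mp hvol
  rw [← ENNReal.ofReal_natCast, ← ENNReal.ofReal_mul (by positivity),
    ENNReal.ofReal_le_ofReal_iff (by positivity)] at hvol'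
  calc (C.card : ℝ) ≤ (1 + ε / 2) ^ finrank ℝ E / (ε / 2) ^ finrank ℝ E := by
        rwa [le_div_iff₀ (by positivity)]
    _ = (1 + 2 / ε) ^ finrank ℝ E := by
        rw [← div_pow]; congr 1; field_simp; ring

theorem encard_le_of_isSeparated_of_subset_closedBall {C : Set E} {ε : ℝ≥0}
    (hε : 0 < ε) (hC : C ⊆ closedBall 0 1) (hsep : IsSeparated ε C) :
    C.encard ≤ ⌊(1 + 2 / (ε : ℝ)) ^ finrank ℝ E⌋₊ := by
  by_contra! hlt
  obtain ⟨T, hTC, hT⟩ := Set.exists_subset_encard_eq (Order.add_one_le_of_lt hlt)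
  have hTfin : T.Finite := Set.finite_of_encard_eq_coe hT
  have hcard := Finset.card_le_of_isSeparated_of_subset_closedBall (C := hTfin.toFinset) hε
    (by rw [hTfin.coe_toFinset]; exact hTC.trans hC)
    (by rw [hTfin.coe_toFinset]; exact hsep.subset hTC)
  rw [hTfin.encard_eq_coe_toFinset_card] at hT
  have : hTfin.toFinset.card = ⌊(1 + 2 / (ε : ℝ)) ^ finrank ℝ E⌋₊ + 1 := by exact_mod_cast hT
  rw [this] at hcard
  push_cast at hcard
  linarith [Nat.lt_floor_add_one ((1 + 2 / (ε : ℝ)) ^ finrank ℝ E)]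

theorem exists_finset_isCover_of_subset_closedBall {A : Set E} {ε : ℝ≥0} (hε : 0 < ε)
    (hA : A ⊆ closedBall 0 1) :
    ∃ N : Finset E, ↑N ⊆ A ∧ IsCover ε A N ∧ (N.card : ℝ) ≤ (1 + 2 / ε) ^ finrank ℝ E := by
  have hpack : packingNumber ε A ≤ ⌊(1 + 2 / (ε : ℝ)) ^ finrank ℝ E⌋₊ :=
    iSup₂_le fun C hCA => iSup_le fun hsep =>
      encard_le_of_isSeparated_of_subset_closedBall hε (hCA.trans hA) hsep
  have hfin : packingNumber ε A ≠ ⊤ := ne_top_of_le_ne_top (ENat.natCast_ne_top _) hpack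
  have hN : (maximalSeparatedSet ε A).Finite := Set.finite_of_encard_le_coe
    ((encard_maximalSeparatedSet hfin).trans_le hpack)
  refine ⟨hN.toFinset, by simpa using maximalSeparatedSet_subset,
    by simpa using isCover_maximalSeparatedSet hfin,
    Finset.card_le_of_isSeparated_of_subset_closedBall hε ?_ ?_⟩
  · rw [hN.coe_toFinset]; exact maximalSeparatedSet_subset.trans hA
  · rw [hN.coe_toFinset]; exact isSeparated_maximalSeparatedSet

theorem Submodule.exists_finset_isCover_of_subset_closedBall (V : Submodule ℝ E) {A : Set E}
    {ε : ℝ≥0} (hε : 0 < ε) (hAV : A ⊆ V) (hA : A ⊆ closedBall 0 1) :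
    ∃ N : Finset E, ↑N ⊆ A ∧ IsCover ε A N ∧ (N.card : ℝ) ≤ (1 + 2 / ε) ^ finrank ℝ V := by
  obtain ⟨N, hNA, hcover, hcard⟩ := _root_.exists_finset_isCover_of_subset_closedBall
    (A := ((↑) : V → E) ⁻¹' A) hε fun x hx => by simpa using hA hx
  refine ⟨N.map (Function.Embedding.subtype _), ?_, ?_, by simpa using hcard⟩
  · simpa using Set.image_subset_iff.mpr hNA
  · have himage : ((↑) : V → E) '' (((↑) : V → E) ⁻¹' A) = A := by
      rw [Set.image_preimage_eq_iff, Subtype.range_coe]; exact hAV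
    rw [← himage, Finset.coe_map, Function.Embedding.coe_subtype]
    exact (Isometry.isCover_image_iff isometry_subtype_coe _).mpr hcover

end Packing

namespace EuclideanSpace

variable {ι : Type*} [Fintype ι] [DecidableEq ι]

theorem mem_span_single_of_forall_notMem_eq_zero {S : Finset ι} {x : EuclideanSpace ℝ ι}
    (hx : ∀ i ∉ S, x i = 0) :
    x ∈ Submodule.span ℝ (↑(S.image fun i => single i (1 : ℝ)) : Set (EuclideanSpace ℝ ι)) := by
  have hsum : x = ∑ i ∈ S, x i • single i (1 : ℝ) := by
    ext j
    by_cases hj : j ∈ S <;> simp [Pi.single_apply, hj, hx]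
  rw [hsum]
  exact Submodule.sum_mem _ fun i hi =>
    Submodule.smul_mem _ _ (Submodule.subset_span (by simpa using ⟨i, hi, rfl⟩))

theorem exists_finset_isCover_of_forall_notMem_eq_zero {S : Finset ι}
    {A : Set (EuclideanSpace ℝ ι)} (hAS : ∀ x ∈ A, ∀ i ∉ S, x i = 0) (hA : A ⊆ closedBall 0 1)
    {ε : ℝ≥0} (hε : 0 < ε) :
    ∃ N : Finset (EuclideanSpace ℝ ι), ↑N ⊆ A ∧ IsCover ε A N ∧
      (N.card : ℝ) ≤ (1 + 2 / ε) ^ #S := by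
  obtain ⟨N, hNA, hcover, hcard⟩ := Submodule.exists_finset_isCover_of_subset_closedBall
    (Submodule.span ℝ (↑(S.image fun i => single i (1 : ℝ)) : Set (EuclideanSpace ℝ ι))) hε
    (fun x hx => mem_span_single_of_forall_notMem_eq_zero (hAS x hx)) hA
  refine ⟨N, hNA, hcover, hcard.trans (pow_le_pow_right₀ (by simp; positivity) ?_)⟩
  exact (finrank_span_finset_le_card _).trans card_image_le

def sparseSphere (ι : Type*) [Fintype ι] (m : ℕ) : Set (EuclideanSpace ℝ ι) :=
  {x | ‖x‖ = 1 ∧ #{i | x i ≠ 0} ≤ m}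

theorem exists_finset_isCover_sparseSphere {m : ℕ} (hm : m ≤ Fintype.card ι) {ε : ℝ≥0}
    (hε : 0 < ε) :
    ∃ N : Finset (EuclideanSpace ℝ ι), ↑N ⊆ sparseSphere ι m ∧ IsCover ε (sparseSphere ι m) N ∧
      (N.card : ℝ) ≤ (Fintype.card ι).choose m * (1 + 2 / ε) ^ m := by
  choose net hnet_sub hnet_cover hnet_card using fun S : Finset ι =>
    exists_finset_isCover_of_forall_notMem_eq_zero (A := sparseSphere ι m ∩ {x | ∀ i ∉ S, x i = 0})
      (fun x hx => hx.2) (fun x hx => by simp [hx.1.1]) hε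
  refine ⟨(powersetCard m univ).biUnion net, ?_, ?_, ?_⟩
  · intro y hy
    obtain ⟨S, -, hyS⟩ := mem_biUnion.mp hy
    exact (hnet_sub S hyS).1
  · intro x hx
    obtain ⟨S, hTS, -, hS⟩ := exists_subsuperset_card_eq (subset_univ _) hx.2 (by simpa using hm)
    have hxS : x ∈ sparseSphere ι m ∩ {x | ∀ i ∉ S, x i = 0} :=
      ⟨hx, fun i hi => by_contra fun hxi => hi (hTS (by simpa using hxi))⟩
    obtain ⟨y, hy, hxy⟩ := hnet_cover S hxS
    exact ⟨y, mem_biUnion.mpr ⟨S, mem_powersetCard_univ.mpr hS, hy⟩, hxy⟩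
  · calc ((powersetCard m univ).biUnion net).card
        ≤ ∑ S ∈ powersetCard m (univ : Finset ι), ((net S).card : ℝ) := by
          exact_mod_cast card_biUnion_le
      _ ≤ ∑ S ∈ powersetCard m (univ : Finset ι), (1 + 2 / (ε : ℝ)) ^ m :=
          sum_le_sum fun S hS => (mem_powersetCard_univ.mp hS) ▸ hnet_card S
      _ = (Fintype.card ι).choose m * (1 + 2 / ε) ^ m := by simp

end EuclideanSpace

theorem Nat.cast_choose_le_exp_one_mul_div_pow (n k : ℕ) :
    (n.choose k : ℝ) ≤ (exp 1 * n / k) ^ k := by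
  have hexp : (k : ℝ) ^ k / k.factorial ≤ exp k := pow_div_factorial_le_exp _ k.cast_nonneg k
  calc (n.choose k : ℝ) ≤ n ^ k / k.factorial := Nat.choose_le_pow_div k n
    _ = (n / k) ^ k * (k ^ k / k.factorial) := by
        rcases k.eq_zero_or_pos with rfl | hk_pos
        · simp
        · rw [div_pow, mul_div, div_mul_cancel₀ _ (by positivity)]
    _ ≤ (n / k) ^ k * exp 1 ^ k := by
        rw [← exp_nat_mul, mul_one]; gcongr
    _ = (exp 1 * n / k) ^ k := by rw [← mul_pow]; ring

theorem cast_choose_floor_mul_pow_le {c₀ c₁ : ℝ} {n : ℕ} (hc₀ : 0 < c₀) (hc₁ : 0 < c₁)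
    (hc₀' : c₀ ≤ 1) (hc₁' : c₁ ≤ 1) (hn : 2 ≤ c₀ * n) :
    (n.choose ⌊c₀ * n⌋₊ : ℝ) * (1 + 2 / c₁) ^ ⌊c₀ * n⌋₊ ≤ (18 / (c₀ * c₁)) ^ (c₀ * n) := by
  set m := ⌊c₀ * n⌋₊
  have hm_le : (m : ℝ) ≤ c₀ * n := Nat.floor_le (by positivity)
  have hm_pos : (0 : ℝ) < m := by
    have : 1 ≤ m := Nat.le_floor (by push_cast; linarith)
    exact_mod_cast this
  have hm_half : c₀ * n ≤ 2 * m := by linarith [Nat.lt_floor_add_one (c₀ * n)]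
  have hnm : (n : ℝ) / m ≤ 2 / c₀ := by
    rw [div_le_div_iff₀ hm_pos hc₀]; linarith
  have hbase : exp 1 * n / m * (3 / c₁) ≤ 18 / (c₀ * c₁) :=
    calc exp 1 * n / m * (3 / c₁) = exp 1 * (n / m) * (3 / c₁) := by ring
      _ ≤ 3 * (2 / c₀) * (3 / c₁) := by
          gcongr
          linarith [exp_one_lt_d9]
      _ = 18 / (c₀ * c₁) := by field_simp; ring
  have hone : 1 ≤ 18 / (c₀ * c₁) := by
    rw [le_div_iff₀ (by positivity)]; nlinarith [mul_le_mul hc₀' hc₁' hc₁.le zero_le_one]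
  calc (n.choose m : ℝ) * (1 + 2 / c₁) ^ m ≤ (exp 1 * n / m) ^ m * (3 / c₁) ^ m := by
        gcongr
        · exact Nat.cast_choose_le_exp_one_mul_div_pow n m
        · rw [le_div_iff₀ hc₁, add_mul, div_mul_cancel₀ _ hc₁.ne']; linarith
    _ = (exp 1 * n / m * (3 / c₁)) ^ m := (mul_pow ..).symm
    _ ≤ (18 / (c₀ * c₁)) ^ m := by gcongr
    _ = (18 / (c₀ * c₁)) ^ (m : ℝ) := (rpow_natCast ..).symm
    _ ≤ (18 / (c₀ * c₁)) ^ (c₀ * n) := rpow_le_rpow_of_exponent_le hone hm_le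

theorem sparse_iff_card_le_floor {n : ℕ} {c₀ : ℝ} (hc₀ : 0 ≤ c₀) {y : EuclideanSpace ℝ (Fin n)} :
    Sparse c₀ y ↔ #{i | y i ≠ 0} ≤ ⌊c₀ * n⌋₊ :=
  (Nat.le_floor_iff (by positivity)).symm

theorem Compressible.of_mem_sparseSphere {n : ℕ} {c₀ c₁ : ℝ} (hc₀ : 0 ≤ c₀) (hc₁ : 0 ≤ c₁)
    {y : EuclideanSpace ℝ (Fin n)} (hy : y ∈ EuclideanSpace.sparseSphere (Fin n) ⌊c₀ * n⌋₊) :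
    Compressible c₀ c₁ y :=
  ⟨hy.1, y, (sparse_iff_card_le_floor hc₀).mpr hy.2, by simpa using hc₁⟩

theorem Compressible.exists_mem_sparseSphere {n : ℕ} {c₀ c₁ : ℝ} (hc₀ : 0 ≤ c₀) (hc₁ : c₁ < 1)
    {x : EuclideanSpace ℝ (Fin n)} (hx : Compressible c₀ c₁ x) :
    ∃ y ∈ EuclideanSpace.sparseSphere (Fin n) ⌊c₀ * n⌋₊, ‖x - y‖ ≤ 2 * c₁ := by
  obtain ⟨hx1, y, hy, hxy⟩ := hx
  have hy0 : y ≠ 0 := by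
    rintro rfl
    rw [sub_zero, hx1] at hxy
    linarith
  refine ⟨‖y‖⁻¹ • y, ⟨norm_smul_inv_norm hy0, ?_⟩, ?_⟩
  · have hsupp : #{i | (‖y‖⁻¹ • y) i ≠ 0} = #{i | y i ≠ 0} := by
      simp [hy0]
    rw [hsupp]
    exact (sparse_iff_card_le_floor hc₀).mp hy
  · calc ‖x - ‖y‖⁻¹ • y‖ ≤ ‖x - y‖ + ‖y - ‖y‖⁻¹ • y‖ := norm_sub_le_norm_sub_add_norm_sub _ _ _
      _ ≤ 2 * c₁ := by linarith [norm_sub_inv_norm_smul_le hx1 y]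

/-- The set of compressible unit vectors admits a `(3c₁)`-net of cardinality at most
`(18/(c₀c₁))^{c₀ n}`, provided `n ≥ 2/c₀`. -/
theorem stmt9 {n : ℕ} (c₀ c₁ : ℝ) (h₀ : c₀ ∈ Set.Ioo (0 : ℝ) 1) (h₁ : c₁ ∈ Set.Ioo (0 : ℝ) 1)
    (hn : 2 / c₀ ≤ (n : ℝ)) :
    ∃ N : Finset (EuclideanSpace ℝ (Fin n)),
      (∀ y ∈ N, Compressible c₀ c₁ y) ∧
      (∀ x : EuclideanSpace ℝ (Fin n), Compressible c₀ c₁ x → ∃ y ∈ N, ‖x - y‖ ≤ 3 * c₁) ∧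
      (N.card : ℝ) ≤ (18 / (c₀ * c₁)) ^ (c₀ * (n : ℝ)) := by
  obtain ⟨hc₀, hc₀'⟩ := h₀
  obtain ⟨hc₁, hc₁'⟩ := h₁
  have hcn : 2 ≤ c₀ * n := by rwa [div_le_iff₀ hc₀, mul_comm] at hn
  have hmn : ⌊c₀ * n⌋₊ ≤ Fintype.card (Fin n) := by
    rw [Fintype.card_fin]; exact Nat.floor_le_of_le (by nlinarith)
  obtain ⟨N, hN, hcover, hcard⟩ :=
    EuclideanSpace.exists_finset_isCover_sparseSphere hmn (Real.toNNReal_pos.mpr hc₁)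
  refine ⟨N, fun y hy => .of_mem_sparseSphere hc₀.le hc₁.le (hN hy), fun x hx => ?_, ?_⟩
  · obtain ⟨y, hy, hxy⟩ := hx.exists_mem_sparseSphere hc₀.le hc₁'
    obtain ⟨z, hz, hyz⟩ := hcover hy
    change edist y z ≤ c₁.toNNReal at hyz
    rw [edist_le_coe, ← NNReal.coe_le_coe, coe_nndist,
      Real.coe_toNNReal _ hc₁.le, dist_eq_norm] at hyz
    refine ⟨z, hz, ?_⟩
    calc ‖x - z‖ ≤ ‖x - y‖ + ‖y - z‖ := norm_sub_le_norm_sub_add_norm_sub _ _ _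
      _ ≤ 3 * c₁ := by linarith
  · rw [Fintype.card_fin, Real.coe_toNNReal _ hc₁.le] at hcard
    exact hcard.trans (cast_choose_floor_mul_pow_le hc₀ hc₁ hc₀'.le hc₁'.le hcn)
end

section
/- Fix constants c₀, c₁ ∈ (0,1), set c₂ := (1/4)c₀c₁², and let γ ∈ (0, c₂), L ≥ 1. For every incompressible unit vector x ∈ Incomp(c₀,c₁), the regularized least common denominator satisfies D̂_L(x,γ) ≥ c√(γn), where c > 0 depends only on c₀ and c₁. -/
/-! A unit vector whose coordinates are all at most `B` in absolute value has LCD at least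
`1 / (2B)`: for smaller `θ` every coordinate of `θ y` lies within `1/2` of `0`, so `0` is a
nearest lattice point and `dist(θ y, ℤᵐ) = θ`, while `L √(log₊(θ/L)) ≤ θ` always.
On a spread set `I` with `a ≤ |x_k| ≤ A` we have `‖x_I‖ ≥ a √|I|`, so the coordinates of
`x_I / ‖x_I‖` are at most `A / (a √|I|)`; for the spread set of `x`, `a / A = c₁ √(c₀ / 2)`. -/

open scoped ENNReal

/-- The least common denominator of `x` (infimum in `ℝ≥0∞`, so `∞` if no such `θ`). -/
noncomputable def LCD {m : Type*} [Fintype m] (L : ℝ) (x : EuclideanSpace ℝ m) : ℝ≥0∞ :=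
  ⨅ θ ∈ {θ : ℝ | 0 < θ ∧
      Metric.infDist (θ • x) {z : EuclideanSpace ℝ m | ∀ i, ∃ q : ℤ, z i = (q : ℝ)} <
        L * Real.sqrt (max (Real.log (θ / L)) 0)},
    ENNReal.ofReal θ

noncomputable def restrictNormalize {ι : Type*} (x : EuclideanSpace ℝ ι) (I : Finset ι) :
    EuclideanSpace ℝ I :=
  WithLp.toLp 2 fun i => x i / Real.sqrt (∑ j ∈ I, x j ^ 2)

lemma abs_le_abs_sub_intCast {t : ℝ} (ht : |t| ≤ 1 / 2) (q : ℤ) : |t| ≤ |t - q| := by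
  rcases eq_or_ne q 0 with rfl | hq
  · simp
  have hq1 : (1 : ℝ) ≤ |(q : ℝ)| := by
    rw [← Int.cast_abs]; exact_mod_cast Int.one_le_abs hq
  linarith [abs_sub_abs_le_abs_sub (q : ℝ) t, abs_sub_comm (q : ℝ) t]

lemma norm_le_infDist_intLattice {m : Type*} [Fintype m] (v : EuclideanSpace ℝ m)
    (hv : ∀ i, |v i| ≤ 1 / 2) :
    ‖v‖ ≤ Metric.infDist v {z : EuclideanSpace ℝ m | ∀ i, ∃ q : ℤ, z i = (q : ℝ)} := by
  refine (Metric.le_infDist ⟨0, fun _ => ⟨0, by simp⟩⟩).2 fun z hz => ?_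
  rw [dist_eq_norm, EuclideanSpace.norm_eq, EuclideanSpace.norm_eq]
  refine Real.sqrt_le_sqrt (Finset.sum_le_sum fun i _ => ?_)
  obtain ⟨q, hq⟩ := hz i
  simp only [Real.norm_eq_abs, PiLp.sub_apply, hq]
  exact pow_le_pow_left₀ (abs_nonneg _) (abs_le_abs_sub_intCast (hv i) q) 2

lemma mul_sqrt_max_log_div_le {L θ : ℝ} (hL : 0 < L) (hθ : 0 < θ) :
    L * Real.sqrt (max (Real.log (θ / L)) 0) ≤ θ := by
  have ht : 0 < θ / L := div_pos hθ hL
  have hsqrt : Real.sqrt (max (Real.log (θ / L)) 0) ≤ θ / L := by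
    rw [Real.sqrt_le_left ht.le, max_le_iff]
    exact ⟨by nlinarith [Real.log_le_sub_one_of_pos ht], sq_nonneg _⟩
  calc L * Real.sqrt (max (Real.log (θ / L)) 0) ≤ L * (θ / L) := by gcongr
    _ = θ := mul_div_cancel₀ θ hL.ne'

lemma ofReal_le_LCD_of_two_mul_abs_le {m : Type*} [Fintype m] {L θ₀ : ℝ} (hL : 0 < L)
    {y : EuclideanSpace ℝ m} (hy : ‖y‖ = 1) (hθ₀ : ∀ i, 2 * θ₀ * |y i| ≤ 1) :
    ENNReal.ofReal θ₀ ≤ LCD L y := by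
  refine le_iInf₂ fun θ ⟨hθ, hdist⟩ => ENNReal.ofReal_le_ofReal (not_lt.1 fun hlt => ?_)
  have hcoord : ∀ i, |(θ • y) i| ≤ 1 / 2 := fun i => by
    rw [PiLp.smul_apply, smul_eq_mul, abs_mul, abs_of_pos hθ]
    nlinarith [hθ₀ i, abs_nonneg (y i)]
  have hnorm : ‖θ • y‖ = θ := by rw [norm_smul, hy, mul_one, Real.norm_of_nonneg hθ.le]
  have := norm_le_infDist_intLattice _ hcoord
  linarith [mul_sqrt_max_log_div_le hL hθ]

lemma norm_restrictNormalize {ι : Type*} {x : EuclideanSpace ℝ ι} {I : Finset ι}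
    (hs : 0 < ∑ j ∈ I, x j ^ 2) : ‖restrictNormalize x I‖ = 1 := by
  rw [EuclideanSpace.norm_eq, Real.sqrt_eq_one]
  simp only [restrictNormalize, PiLp.toLp_apply, Real.norm_eq_abs, sq_abs, div_pow,
    Real.sq_sqrt hs.le]
  rw [← Finset.sum_div, Finset.sum_coe_sort I fun j => x j ^ 2, div_self hs.ne']

lemma ofReal_le_LCD_restrictNormalize {ι : Type*} {L a A : ℝ} (hL : 0 < L)
    {x : EuclideanSpace ℝ ι} {I : Finset ι} (hI : I.Nonempty) (ha : 0 < a)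
    (h : ∀ k ∈ I, a ≤ |x k| ∧ |x k| ≤ A) :
    ENNReal.ofReal (a / (2 * A) * Real.sqrt I.card) ≤ LCD L (restrictNormalize x I) := by
  obtain ⟨k₀, hk₀⟩ := hI
  have hA : 0 < A := ha.trans_le ((h k₀ hk₀).1.trans (h k₀ hk₀).2)
  set s := ∑ j ∈ I, x j ^ 2
  have hsum : I.card * a ^ 2 ≤ s := by
    simpa using Finset.card_nsmul_le_sum I (fun j => x j ^ 2) (a ^ 2) fun k hk => by
      simpa only [sq_abs] using pow_le_pow_left₀ ha.le (h k hk).1 2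
  have hs : 0 < s :=
    lt_of_lt_of_le (mul_pos (Nat.cast_pos.2 (Finset.card_pos.2 ⟨k₀, hk₀⟩)) (by positivity)) hsum
  have hroot : a * Real.sqrt I.card ≤ Real.sqrt s := by
    rw [← Real.sqrt_sq ha.le, ← Real.sqrt_mul (sq_nonneg a)]
    exact Real.sqrt_le_sqrt (by linarith)
  refine ofReal_le_LCD_of_two_mul_abs_le hL (norm_restrictNormalize hs) fun i => ?_
  have hsqrt : 0 < Real.sqrt s := Real.sqrt_pos.2 hs
  calc 2 * (a / (2 * A) * Real.sqrt I.card) * |restrictNormalize x I i|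
      = a * Real.sqrt I.card * |x i| / (Real.sqrt s * A) := by
        simp only [restrictNormalize, PiLp.toLp_apply, abs_div]
        rw [abs_of_pos hsqrt]
        field_simp
    _ ≤ 1 := by
      rw [div_le_one (by positivity)]
      exact mul_le_mul hroot (h i i.2).2 (abs_nonneg _) hsqrt.le

/-- Lower bound on the regularized LCD: there is `c > 0` depending only on `c₀, c₁` so that
for every incompressible `x`, any spread set `S` of `⌈c₂ n⌉` coordinates with
`c₁/√(2n) ≤ |x_k| ≤ 1/√(c₀n)`, and `γ ∈ (0, c₂)`, `L ≥ 1`, the regularized LCD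
`D̂_L(x,γ) = max {D_L(x_I/‖x_I‖) : I ⊆ S, |I| = ⌈γn⌉}` is at least `c √(γ n)`. -/
theorem stmt15 (c₀ c₁ : ℝ) (h₀ : c₀ ∈ Set.Ioo (0 : ℝ) 1) (h₁ : c₁ ∈ Set.Ioo (0 : ℝ) 1) :
    ∃ c : ℝ, 0 < c ∧
      ∀ (n : ℕ) (γ L : ℝ), γ ∈ Set.Ioo 0 ((1 / 4) * c₀ * c₁ ^ 2) → 1 ≤ L →
      ∀ x : EuclideanSpace ℝ (Fin n), Incompressible c₀ c₁ x →
      ∀ S : Finset (Fin n), S.card = ⌈(1 / 4) * c₀ * c₁ ^ 2 * n⌉₊ →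
        (∀ k ∈ S, c₁ / Real.sqrt (2 * n) ≤ |x k| ∧ |x k| ≤ 1 / Real.sqrt (c₀ * n)) →
        ENNReal.ofReal (c * Real.sqrt (γ * n)) ≤
          ⨆ I ∈ {I : Finset (Fin n) | I ⊆ S ∧ I.card = ⌈γ * n⌉₊},
            LCD L (WithLp.toLp 2 (fun i : {k // k ∈ I} =>
              x i / Real.sqrt (∑ j ∈ I, (x j) ^ 2)) : EuclideanSpace ℝ {k // k ∈ I}) := by
  obtain ⟨hc₀, -⟩ := h₀
  obtain ⟨hc₁, -⟩ := h₁
  refine ⟨c₁ * Real.sqrt (c₀ / 2) / 2, by positivity, fun n γ L hγ hL x _ S hS hspread => ?_⟩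
  rcases n.eq_zero_or_pos with rfl | hn
  · simp
  have hn' : (0 : ℝ) < n := Nat.cast_pos.2 hn
  obtain ⟨I, hIS, hIcard⟩ : ∃ I ⊆ S, I.card = ⌈γ * n⌉₊ :=
    Finset.exists_subset_card_eq (hS ▸ Nat.ceil_mono (by gcongr; exact hγ.2.le))
  have hI : I.Nonempty := by
    rw [← Finset.card_pos, hIcard]; exact Nat.ceil_pos.2 (mul_pos hγ.1 hn')
  have hratio : c₁ / Real.sqrt (2 * n) / (2 * (1 / Real.sqrt (c₀ * n))) =
      c₁ * Real.sqrt (c₀ / 2) / 2 := by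
    rw [show c₀ / 2 = c₀ * n / (2 * n) by field_simp, Real.sqrt_div' _ (by positivity)]
    field_simp
  calc ENNReal.ofReal (c₁ * Real.sqrt (c₀ / 2) / 2 * Real.sqrt (γ * n))
      ≤ ENNReal.ofReal (c₁ / Real.sqrt (2 * n) / (2 * (1 / Real.sqrt (c₀ * n))) *
          Real.sqrt I.card) := by
        rw [hratio, hIcard]; gcongr; exact Nat.le_ceil _
    _ ≤ LCD L (restrictNormalize x I) :=
        ofReal_le_LCD_restrictNormalize (by linarith) hI (by positivity)
          fun k hk => hspread k (hIS hk)
    _ ≤ _ := le_iSup₂_of_le I ⟨hIS, hIcard⟩ le_rfl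
end

section
/- Let V₁, ..., V_m be independent real random variables and let c > 0, c' ∈ (0,1), α ∈ (0,1) with ℙ(|Vᵢ| ≤ c) ≤ 1 − c' for each i. Then ℙ(∑_{i=1}^m Vᵢ² ≤ αc²m) ≤ binom(m, ⌈αm⌉)·(1 − c')^{m − ⌈αm⌉}. -/
open MeasureTheory ProbabilityTheory Finset
open scoped ENNReal

/-!
If `∑ Vᵢ² ≤ α c² m`, at most `⌈α m⌉` of the `Vᵢ` exceed `c` in absolute value, so some
`m - ⌈α m⌉` of them satisfy `|Vᵢ| ≤ c` simultaneously. A union bound over the choice of these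
indices, together with independence, gives the estimate.
-/

theorem exists_card_eq_forall_abs_le_of_sum_sq_le {ι : Type*} [Fintype ι] (x : ι → ℝ)
    {a c : ℝ} (hc : 0 < c) (h : ∑ i, x i ^ 2 ≤ a * c ^ 2) :
    ∃ s : Finset ι, #s = Fintype.card ι - ⌈a⌉₊ ∧ ∀ i ∈ s, |x i| ≤ c := by
  classical
  set T : Finset ι := {i | c < |x i|}
  have hT : (#T : ℝ) * c ^ 2 ≤ a * c ^ 2 :=
    calc (#T : ℝ) * c ^ 2 = ∑ _i ∈ T, c ^ 2 := by rw [sum_const, nsmul_eq_mul]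
      _ ≤ ∑ i ∈ T, x i ^ 2 := sum_le_sum fun i hi =>
          (sq_abs (x i)).symm ▸ pow_le_pow_left₀ hc.le (mem_filter.1 hi).2.le 2
      _ ≤ ∑ i, x i ^ 2 := sum_le_sum_of_subset_of_nonneg (subset_univ T) fun i _ _ => sq_nonneg _
      _ ≤ a * c ^ 2 := h
  have hTa : #T ≤ ⌈a⌉₊ := Nat.cast_le.1 <|
    (le_of_mul_le_mul_right hT (pow_pos hc 2)).trans (Nat.le_ceil a)
  obtain ⟨s, hsT, hs⟩ : ∃ s ⊆ Tᶜ, #s = Fintype.card ι - ⌈a⌉₊ :=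
    exists_subset_card_eq (by rw [card_compl]; omega)
  refine ⟨s, hs, fun i hi => ?_⟩
  simpa [T] using hsT hi

theorem ProbabilityTheory.iIndepFun.measure_exists_card_eq_forall_mem_le {Ω ι : Type*}
    [MeasurableSpace Ω] {μ : Measure Ω} [Fintype ι] {β : ι → Type*}
    [∀ i, MeasurableSpace (β i)] {V : ∀ i, Ω → β i} (hV : iIndepFun V μ)
    {B : ∀ i, Set (β i)} (hB : ∀ i, MeasurableSet (B i)) {p : ℝ≥0∞}
    (hp : ∀ i, μ (V i ⁻¹' B i) ≤ p) (k : ℕ) :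
    μ {ω | ∃ s : Finset ι, #s = k ∧ ∀ i ∈ s, V i ω ∈ B i} ≤
      (Fintype.card ι).choose k * p ^ k := by
  have hunion : {ω | ∃ s : Finset ι, #s = k ∧ ∀ i ∈ s, V i ω ∈ B i} =
      ⋃ s ∈ univ.powersetCard k, ⋂ i ∈ s, V i ⁻¹' B i := by
    ext ω
    simp
  calc μ {ω | ∃ s : Finset ι, #s = k ∧ ∀ i ∈ s, V i ω ∈ B i}
      ≤ ∑ s ∈ univ.powersetCard k, μ (⋂ i ∈ s, V i ⁻¹' B i) :=
        hunion ▸ measure_biUnion_finset_le _ _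
    _ ≤ ∑ _s ∈ univ.powersetCard k, p ^ k := sum_le_sum fun s hs => by
        rw [hV.meas_biInter fun i _ => ⟨B i, hB i, rfl⟩, ← (mem_powersetCard.1 hs).2]
        exact prod_le_pow_card s _ p fun i _ => hp i
    _ = (Fintype.card ι).choose k * p ^ k := by
        rw [sum_const, card_powersetCard, card_univ, nsmul_eq_mul]

theorem stmt18_general {Ω : Type*} [MeasurableSpace Ω] (P : Measure Ω) [IsProbabilityMeasure P]
    {m : ℕ} (V : Fin m → Ω → ℝ)
    (hindep : iIndepFun V P)
    (c c' α : ℝ) (hc : 0 < c) (hc' : c' ∈ Set.Ioo (0 : ℝ) 1) (hα : α ∈ Set.Ioo (0 : ℝ) 1)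
    (hV : ∀ i, P {ω | |V i ω| ≤ c} ≤ ENNReal.ofReal (1 - c')) :
    P {ω | ∑ i, (V i ω) ^ 2 ≤ α * c ^ 2 * m} ≤
      (m.choose ⌈α * m⌉₊ : ℝ≥0∞) * ENNReal.ofReal ((1 - c') ^ (m - ⌈α * m⌉₊)) := by
  have hsub : {ω | ∑ i, (V i ω) ^ 2 ≤ α * c ^ 2 * m} ⊆
      {ω | ∃ s : Finset (Fin m), #s = m - ⌈α * m⌉₊ ∧ ∀ i ∈ s, V i ω ∈ {x : ℝ | |x| ≤ c}} :=
    fun ω hω => by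
      simpa using exists_card_eq_forall_abs_le_of_sum_sq_le (fun i => V i ω) (a := α * m) hc
        (by linarith [hω.out])
  have hceil : ⌈α * m⌉₊ ≤ m :=
    Nat.ceil_le.2 (mul_le_of_le_one_left (Nat.cast_nonneg m) hα.2.le)
  calc P {ω | ∑ i, (V i ω) ^ 2 ≤ α * c ^ 2 * m}
      ≤ m.choose (m - ⌈α * m⌉₊) * ENNReal.ofReal (1 - c') ^ (m - ⌈α * m⌉₊) := by
        simpa using (measure_mono hsub).trans <| hindep.measure_exists_card_eq_forall_mem_le
          (fun _ => measurableSet_le measurable_abs measurable_const) hV _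
    _ = (m.choose ⌈α * m⌉₊ : ℝ≥0∞) * ENNReal.ofReal ((1 - c') ^ (m - ⌈α * m⌉₊)) := by
        rw [Nat.choose_symm hceil, ENNReal.ofReal_pow (by linarith [hc'.2])]

/-- Union bound for independent random variables with anti-concentration:
`ℙ(∑ Vᵢ² ≤ α c² m) ≤ C(m, ⌈αm⌉)(1 − c')^{m − ⌈αm⌉}`. -/
theorem stmt18 {Ω : Type*} [MeasurableSpace Ω] (P : Measure Ω) [IsProbabilityMeasure P]
    {m : ℕ} (V : Fin m → Ω → ℝ) (hmeas : ∀ i, Measurable (V i))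
    (hindep : iIndepFun V P)
    (c c' α : ℝ) (hc : 0 < c) (hc' : c' ∈ Set.Ioo (0 : ℝ) 1) (hα : α ∈ Set.Ioo (0 : ℝ) 1)
    (hV : ∀ i, P {ω | |V i ω| ≤ c} ≤ ENNReal.ofReal (1 - c')) :
    P {ω | ∑ i, (V i ω) ^ 2 ≤ α * c ^ 2 * m} ≤
      (m.choose ⌈α * m⌉₊ : ℝ≥0∞) * ENNReal.ofReal ((1 - c') ^ (m - ⌈α * m⌉₊)) :=
  stmt18_general P V hindep c c' α hc hc' hα hV
end
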